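/- Suppose (X, S, Y, X̂) are zero-mean jointly Gaussian with E[X | X̂, Y] = X̂ a.s. Then H Q_{X,S|Y}^T = Q_{X|Y} − Σ_Δ, where Σ_Δ := E[(X − X̂)(X − X̂)^T], for the realization X̂ = H S + G Y + W with W independent of (X, S, Y); moreover H Q_{X,S|Y}^T is symmetric positive semidefinite. -/

import Mathlib

open MeasureTheory ProbabilityTheory Matrix
open scoped ENNReal
set_option linter.unusedSectionVars false
set_option maxHeartbeats 1000000

/-- A random vector is (jointly) Gaussian if every linear combination of its components
has a (possibly degenerate) Gaussian law on `ℝ`. -/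
def IsGaussianVec {Ω ι : Type*} [MeasurableSpace Ω] [Fintype ι]
    (μ : Measure Ω) (V : Ω → ι → ℝ) : Prop :=
  ∀ c : ι → ℝ, ∃ m : ℝ, ∃ v : NNReal,
    μ.map (fun ω => ∑ i, c i * V ω i) = gaussianReal m v

/-- Cross-covariance matrix `E[A Bᵀ]` of zero-mean random vectors. -/
noncomputable def covM {Ω : Type*} [MeasurableSpace Ω] (μ : Measure Ω)
    {ι κ : Type*} [Fintype ι] [Fintype κ]
    (A : Ω → ι → ℝ) (B : Ω → κ → ℝ) : Matrix ι κ ℝ :=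
  Matrix.of fun i j => ∫ ω, A ω i * B ω j ∂μ

/-- Conditional (cross-)covariance of zero-mean jointly Gaussian vectors given `C`,
via the Schur complement formula `cov(A,B|C) = Q_{A,B} − Q_{A,C} Q_C⁻¹ Q_{C,B}`. -/
noncomputable def condCovM {Ω : Type*} [MeasurableSpace Ω] (μ : Measure Ω)
    {ι κ τ : Type*} [Fintype ι] [Fintype κ] [Fintype τ] [DecidableEq τ]
    (A : Ω → ι → ℝ) (B : Ω → κ → ℝ) (C : Ω → τ → ℝ) : Matrix ι κ ℝ :=
  covM μ A B - covM μ A C * (covM μ C C)⁻¹ * covM μ C B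

section Helpers

variable {Ω : Type*} [MeasurableSpace Ω] {μ : Measure Ω}
variable {ι κ τ : Type*} [Fintype ι] [Fintype κ] [Fintype τ]

lemma l2_mul_integrable {f g : Ω → ℝ} (hf : MemLp f 2 μ) (hg : MemLp g 2 μ) :
    Integrable (fun ω => f ω * g ω) μ := by
  rw [← memLp_one_iff_integrable]
  have h := hg.smul (φ := f) hf (r := (1 : ENNReal))
    (hpqr := inferInstance)
  exact h

lemma memℒp_mulVec (M : Matrix ι τ ℝ) {A : Ω → τ → ℝ}
    (hA : ∀ k, MemLp (fun ω => A ω k) 2 μ) (i : ι) :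
    MemLp (fun ω => M.mulVec (A ω) i) 2 μ := by
  simp only [Matrix.mulVec, dotProduct]
  exact memLp_finset_sum _ (fun k _ => (hA k).const_mul (M i k))

lemma covM_transpose (A : Ω → ι → ℝ) (B : Ω → κ → ℝ) :
    (covM μ A B)ᵀ = covM μ B A := by
  ext i j
  simp only [covM, Matrix.transpose_apply, Matrix.of_apply, mul_comm]

lemma covM_add_left {A A' : Ω → ι → ℝ} {B : Ω → κ → ℝ}
    (hA : ∀ i, MemLp (fun ω => A ω i) 2 μ) (hA' : ∀ i, MemLp (fun ω => A' ω i) 2 μ)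
    (hB : ∀ j, MemLp (fun ω => B ω j) 2 μ) :
    covM μ (fun ω => A ω + A' ω) B = covM μ A B + covM μ A' B := by
  ext i j
  simp only [covM, Matrix.of_apply, Matrix.add_apply, Pi.add_apply, add_mul]
  exact integral_add (l2_mul_integrable (hA i) (hB j)) (l2_mul_integrable (hA' i) (hB j))

lemma covM_sub_left {A A' : Ω → ι → ℝ} {B : Ω → κ → ℝ}
    (hA : ∀ i, MemLp (fun ω => A ω i) 2 μ) (hA' : ∀ i, MemLp (fun ω => A' ω i) 2 μ)
    (hB : ∀ j, MemLp (fun ω => B ω j) 2 μ) :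
    covM μ (fun ω => A ω - A' ω) B = covM μ A B - covM μ A' B := by
  ext i j
  simp only [covM, Matrix.of_apply, Matrix.sub_apply, Pi.sub_apply, sub_mul]
  exact integral_sub (l2_mul_integrable (hA i) (hB j)) (l2_mul_integrable (hA' i) (hB j))

lemma covM_sub_right {A : Ω → ι → ℝ} {B B' : Ω → κ → ℝ}
    (hA : ∀ i, MemLp (fun ω => A ω i) 2 μ) (hB : ∀ j, MemLp (fun ω => B ω j) 2 μ)
    (hB' : ∀ j, MemLp (fun ω => B' ω j) 2 μ) :
    covM μ A (fun ω => B ω - B' ω) = covM μ A B - covM μ A B' := by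
  ext i j
  simp only [covM, Matrix.of_apply, Matrix.sub_apply, Pi.sub_apply, mul_sub]
  exact integral_sub (l2_mul_integrable (hA i) (hB j)) (l2_mul_integrable (hA i) (hB' j))

lemma covM_mulVec_left (M : Matrix ι τ ℝ) {A : Ω → τ → ℝ} {B : Ω → κ → ℝ}
    (hA : ∀ k, MemLp (fun ω => A ω k) 2 μ) (hB : ∀ j, MemLp (fun ω => B ω j) 2 μ) :
    covM μ (fun ω => M.mulVec (A ω)) B = M * covM μ A B := by
  ext i j
  have h1 : (fun ω => M.mulVec (A ω) i * B ω j)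
      = fun ω => ∑ k, M i k * (A ω k * B ω j) := by
    funext ω
    simp only [Matrix.mulVec, dotProduct, Finset.sum_mul, mul_assoc]
  show (∫ ω, M.mulVec (A ω) i * B ω j ∂μ) = ∑ k, M i k * ∫ ω, A ω k * B ω j ∂μ
  rw [h1, integral_finset_sum _ (fun k _ => (l2_mul_integrable (hA k) (hB j)).const_mul (M i k))]
  exact Finset.sum_congr rfl fun k _ => integral_const_mul _ _

lemma covM_mulVec_right (M : Matrix κ τ ℝ) {A : Ω → ι → ℝ} {B : Ω → τ → ℝ}
    (hA : ∀ i, MemLp (fun ω => A ω i) 2 μ) (hB : ∀ k, MemLp (fun ω => B ω k) 2 μ) :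
    covM μ A (fun ω => M.mulVec (B ω)) = covM μ A B * Mᵀ := by
  have h := congrArg Matrix.transpose (covM_mulVec_left (μ := μ) M hB hA (B := A))
  rw [Matrix.transpose_mul, covM_transpose, covM_transpose] at h
  exact h

end Helpers

/-- if zero-mean jointly Gaussian `(X,S,Y,X̂)` with `X̂ = HS + GY + W`
(`W` independent of `(X,S,Y)`) satisfy `E[X|X̂,Y] = X̂` a.s., then
`H Q_{X,S|Y}ᵀ = Q_{X|Y} − Σ_Δ` where `Σ_Δ = E[(X−X̂)(X−X̂)ᵀ]`, and `H Q_{X,S|Y}ᵀ` is a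
symmetric positive semidefinite matrix. -/
theorem realization_matrix_equations
    {Ω : Type*} [MeasurableSpace Ω]
    (μ : Measure Ω) [IsProbabilityMeasure μ]
    {nx ns ny : ℕ}
    (X : Ω → Fin nx → ℝ) (S : Ω → Fin ns → ℝ) (Y : Ω → Fin ny → ℝ) (W : Ω → Fin nx → ℝ)
    (hX : Measurable X) (hS : Measurable S) (hY : Measurable Y) (hW : Measurable W)
    (hX2 : ∀ i, MemLp (fun ω => X ω i) 2 μ)
    (hS2 : ∀ i, MemLp (fun ω => S ω i) 2 μ)
    (hY2 : ∀ i, MemLp (fun ω => Y ω i) 2 μ)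
    (hW2 : ∀ i, MemLp (fun ω => W ω i) 2 μ)
    (hGauss : IsGaussianVec μ (fun ω => Sum.elim (X ω) (Sum.elim (S ω) (Y ω))))
    (hXmean : ∀ i, ∫ ω, X ω i ∂μ = 0)
    (hSmean : ∀ i, ∫ ω, S ω i ∂μ = 0)
    (hYmean : ∀ i, ∫ ω, Y ω i ∂μ = 0)
    (hQY : (covM μ Y Y).PosDef)
    (hWGauss : IsGaussianVec μ W)
    (hWmean : ∀ i, ∫ ω, W ω i ∂μ = 0)
    (hindep : IndepFun W (fun ω => (X ω, S ω, Y ω)) μ)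
    (H : Matrix (Fin nx) (Fin ns) ℝ) (G : Matrix (Fin nx) (Fin ny) ℝ)
    (Xhat : Ω → Fin nx → ℝ)
    (hXhat : Xhat = fun ω => H.mulVec (S ω) + G.mulVec (Y ω) + W ω)
    -- `E[X | X̂, Y] = X̂` a.s.
    (hcm : ∀ i, μ[fun ω => X ω i | MeasurableSpace.comap (fun ω => (Xhat ω, Y ω)) inferInstance]
      =ᵐ[μ] fun ω => Xhat ω i)
    -- `Σ_Δ := E[(X − X̂)(X − X̂)ᵀ]`
    (SigmaDelta : Matrix (Fin nx) (Fin nx) ℝ)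
    (hSigma : SigmaDelta = covM μ (fun ω => X ω - Xhat ω) (fun ω => X ω - Xhat ω)) :
    H * (condCovM μ X S Y).transpose = condCovM μ X X Y - SigmaDelta ∧
      (H * (condCovM μ X S Y).transpose).PosSemidef := by
  classical
  -- measurability and integrability of X̂
  have hXhatM : Measurable Xhat := by
    rw [hXhat]
    refine Measurable.add (Measurable.add ?_ ?_) hW
    · exact measurable_pi_lambda _ fun i => by
        simp only [Matrix.mulVec, dotProduct]
        exact Finset.measurable_sum _ fun k _ =>
          (measurable_const.mul ((measurable_pi_apply k).comp hS))
    · exact measurable_pi_lambda _ fun i => by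
        simp only [Matrix.mulVec, dotProduct]
        exact Finset.measurable_sum _ fun k _ =>
          (measurable_const.mul ((measurable_pi_apply k).comp hY))
  have hXhat2 : ∀ i, MemLp (fun ω => Xhat ω i) 2 μ := by
    intro i
    rw [hXhat]
    exact ((memℒp_mulVec H hS2 i).add (memℒp_mulVec G hY2 i)).add (hW2 i)
  -- the conditioning σ-algebra
  have hZmeas : Measurable (fun ω => (Xhat ω, Y ω)) := hXhatM.prodMk hY
  have hle : MeasurableSpace.comap (fun ω => (Xhat ω, Y ω)) inferInstance ≤ _ :=
    hZmeas.comap_le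
  haveI : SigmaFinite (μ.trim hle) := by infer_instance
  have hpairG : Measurable[MeasurableSpace.comap (fun ω => (Xhat ω, Y ω)) inferInstance]
      (fun ω => (Xhat ω, Y ω)) := Measurable.of_comap_le le_rfl
  have hXhatG : ∀ j, StronglyMeasurable[MeasurableSpace.comap
      (fun ω => (Xhat ω, Y ω)) inferInstance] (fun ω => Xhat ω j) := fun j =>
    ((measurable_pi_apply j).comp (measurable_fst.comp hpairG)).stronglyMeasurable
  have hYG : ∀ j, StronglyMeasurable[MeasurableSpace.comap
      (fun ω => (Xhat ω, Y ω)) inferInstance] (fun ω => Y ω j) := fun j =>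
    ((measurable_pi_apply j).comp (measurable_snd.comp hpairG)).stronglyMeasurable
  -- orthogonality: for 𝒢-measurable L² test functions Z, E[X_i Z] = E[X̂_i Z]
  have key : ∀ (Z : Ω → ℝ), StronglyMeasurable[MeasurableSpace.comap
      (fun ω => (Xhat ω, Y ω)) inferInstance] Z → MemLp Z 2 μ → ∀ i,
      (∫ ω, X ω i * Z ω ∂μ) = ∫ ω, Xhat ω i * Z ω ∂μ := by
    intro Z hZm hZ2 i
    have hint : Integrable (fun ω => Z ω * X ω i) μ := l2_mul_integrable hZ2 (hX2 i)
    have h1 : μ[(fun ω => Z ω * X ω i) | MeasurableSpace.comap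
        (fun ω => (Xhat ω, Y ω)) inferInstance]
        =ᵐ[μ] Z * μ[(fun ω => X ω i) | MeasurableSpace.comap
        (fun ω => (Xhat ω, Y ω)) inferInstance] :=
      condExp_mul_of_stronglyMeasurable_left hZm hint ((hX2 i).integrable one_le_two)
    have h2 : (∫ ω, Z ω * X ω i ∂μ) = ∫ ω, Z ω * Xhat ω i ∂μ := by
      rw [← integral_condExp hle (f := fun ω => Z ω * X ω i)]
      refine integral_congr_ae (h1.trans ?_)
      filter_upwards [hcm i] with ω hω
      simp only [Pi.mul_apply, hω]
    calc (∫ ω, X ω i * Z ω ∂μ)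
        = ∫ ω, Z ω * X ω i ∂μ :=
          integral_congr_ae (Filter.Eventually.of_forall fun ω => mul_comm _ _)
      _ = ∫ ω, Z ω * Xhat ω i ∂μ := h2
      _ = ∫ ω, Xhat ω i * Z ω ∂μ :=
          integral_congr_ae (Filter.Eventually.of_forall fun ω => mul_comm _ _)
  have hXY_eq : covM μ X Y = covM μ Xhat Y := by
    ext i j
    exact key _ (hYG j) (hY2 j) i
  have hXXhat_eq : covM μ X Xhat = covM μ Xhat Xhat := by
    ext i j
    exact key _ (hXhatG j) (hXhat2 j) i
  -- zero covariances from independence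
  have hWX0 : covM μ W X = 0 := by
    ext i j
    have hind : IndepFun (fun ω => W ω i) (fun ω => X ω j) μ :=
      hindep.comp (measurable_pi_apply i) ((measurable_pi_apply j).comp measurable_fst)
    have h := hind.integral_fun_mul_eq_mul_integral (hW2 i).aestronglyMeasurable (hX2 j).aestronglyMeasurable
    show (∫ ω, W ω i * X ω j ∂μ) = 0
    rw [h, hWmean i, zero_mul]
  have hWY0 : covM μ W Y = 0 := by
    ext i j
    have hind : IndepFun (fun ω => W ω i) (fun ω => Y ω j) μ :=
      hindep.comp (measurable_pi_apply i)
        ((measurable_pi_apply j).comp (measurable_snd.comp measurable_snd))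
    have h := hind.integral_fun_mul_eq_mul_integral (hW2 i).aestronglyMeasurable (hY2 j).aestronglyMeasurable
    show (∫ ω, W ω i * Y ω j ∂μ) = 0
    rw [h, hWmean i, zero_mul]
  -- expansion of covariances with X̂
  have hHS2 : ∀ i, MemLp (fun ω => H.mulVec (S ω) i + G.mulVec (Y ω) i) 2 μ :=
    fun i => (memℒp_mulVec H hS2 i).add (memℒp_mulVec G hY2 i)
  have hXhatY : covM μ Xhat Y = H * covM μ S Y + G * covM μ Y Y := by
    have h1 : covM μ Xhat Y
        = covM μ (fun ω => H.mulVec (S ω) + G.mulVec (Y ω)) Y + covM μ W Y := by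
      rw [hXhat]
      exact covM_add_left hHS2 hW2 hY2
    have h2 : covM μ (fun ω => H.mulVec (S ω) + G.mulVec (Y ω)) Y
        = H * covM μ S Y + G * covM μ Y Y := by
      have := covM_add_left (μ := μ) (A := fun ω => H.mulVec (S ω))
        (A' := fun ω => G.mulVec (Y ω)) (B := Y)
        (fun i => memℒp_mulVec H hS2 i) (fun i => memℒp_mulVec G hY2 i) hY2
      rw [covM_mulVec_left H hS2 hY2, covM_mulVec_left G hY2 hY2] at this
      exact this
    rw [h1, h2, hWY0, add_zero]
  have hXhatX : covM μ Xhat X = H * covM μ S X + G * covM μ Y X := by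
    have h1 : covM μ Xhat X
        = covM μ (fun ω => H.mulVec (S ω) + G.mulVec (Y ω)) X + covM μ W X := by
      rw [hXhat]
      exact covM_add_left hHS2 hW2 hX2
    have h2 : covM μ (fun ω => H.mulVec (S ω) + G.mulVec (Y ω)) X
        = H * covM μ S X + G * covM μ Y X := by
      have := covM_add_left (μ := μ) (A := fun ω => H.mulVec (S ω))
        (A' := fun ω => G.mulVec (Y ω)) (B := X)
        (fun i => memℒp_mulVec H hS2 i) (fun i => memℒp_mulVec G hY2 i) hX2
      rw [covM_mulVec_left H hS2 hX2, covM_mulVec_left G hY2 hX2] at this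
      exact this
    rw [h1, h2, hWX0, add_zero]
  -- Σ_Δ identity
  have hXmXhat2 : ∀ i, MemLp (fun ω => X ω i - Xhat ω i) 2 μ :=
    fun i => (hX2 i).sub (hXhat2 i)
  have hSD : SigmaDelta = covM μ X X - covM μ Xhat X := by
    rw [hSigma]
    have e1 : covM μ (fun ω => X ω - Xhat ω) (fun ω => X ω - Xhat ω)
        = covM μ X (fun ω => X ω - Xhat ω) - covM μ Xhat (fun ω => X ω - Xhat ω) :=
      covM_sub_left hX2 hXhat2 hXmXhat2
    have e2 : covM μ X (fun ω => X ω - Xhat ω) = covM μ X X - covM μ X Xhat :=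
      covM_sub_right hX2 hX2 hXhat2
    have e3 : covM μ Xhat (fun ω => X ω - Xhat ω) = covM μ Xhat X - covM μ Xhat Xhat :=
      covM_sub_right hXhat2 hX2 hXhat2
    rw [e1, e2, e3, hXXhat_eq]
    have hsymm : covM μ Xhat Xhat = covM μ Xhat X := by
      have h := congrArg Matrix.transpose hXXhat_eq
      rw [covM_transpose, covM_transpose] at h
      exact h.symm
    rw [hsymm]
    abel
  -- inverse facts
  have hdet : IsUnit (covM μ Y Y).det := isUnit_iff_ne_zero.mpr hQY.det_pos.ne'
  have hinv1 : covM μ Y Y * (covM μ Y Y)⁻¹ = 1 := Matrix.mul_nonsing_inv _ hdet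
  have hYYsymm : (covM μ Y Y)ᵀ = covM μ Y Y := covM_transpose Y Y
  have hinvT : ((covM μ Y Y)⁻¹)ᵀ = (covM μ Y Y)⁻¹ := by
    rw [Matrix.transpose_nonsing_inv, hYYsymm]
  -- G from the orthogonality to Y
  have hGform : G = (covM μ X Y - H * covM μ S Y) * (covM μ Y Y)⁻¹ := by
    have hGQ : G * covM μ Y Y = covM μ X Y - H * covM μ S Y := by
      rw [hXY_eq, hXhatY]
      abel
    rw [← hGQ, Matrix.mul_assoc, hinv1, Matrix.mul_one]
  -- first claim
  have goal1 : H * (condCovM μ X S Y)ᵀ = condCovM μ X X Y - SigmaDelta := by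
    rw [condCovM, condCovM, hSD]
    simp only [Matrix.transpose_sub, Matrix.transpose_mul, hinvT, covM_transpose]
    rw [hXhatX, hGform]
    simp only [Matrix.mul_sub, Matrix.sub_mul, Matrix.mul_assoc]
    abel
  refine ⟨goal1, ?_⟩
  -- positive semidefiniteness: the matrix is a covariance matrix of V = X̂ − B Y
  set B : Matrix (Fin nx) (Fin ny) ℝ := covM μ X Y * (covM μ Y Y)⁻¹ with hB
  set V : Ω → Fin nx → ℝ := fun ω => Xhat ω - B.mulVec (Y ω) with hV
  have hBY2 : ∀ i, MemLp (fun ω => B.mulVec (Y ω) i) 2 μ := fun i => memℒp_mulVec B hY2 i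
  have hV2 : ∀ i, MemLp (fun ω => V ω i) 2 μ := fun i => (hXhat2 i).sub (hBY2 i)
  have hYXhat : covM μ Y Xhat = covM μ Y X := by
    have h := congrArg Matrix.transpose hXY_eq
    rw [covM_transpose, covM_transpose] at h
    exact h.symm
  have hsymm : covM μ Xhat Xhat = covM μ Xhat X := by
    have h := congrArg Matrix.transpose hXXhat_eq
    rw [covM_transpose, covM_transpose] at h
    exact h.symm
  have hBT : Bᵀ = (covM μ Y Y)⁻¹ * covM μ Y X := by
    rw [hB, Matrix.transpose_mul, hinvT]
    congr 1
    exact covM_transpose X Y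
  have hYV : covM μ Y V = 0 := by
    have e1 : covM μ Y V = covM μ Y Xhat - covM μ Y (fun ω => B.mulVec (Y ω)) :=
      covM_sub_right hY2 hXhat2 hBY2
    have e2 : covM μ Y (fun ω => B.mulVec (Y ω)) = covM μ Y Y * Bᵀ :=
      covM_mulVec_right B hY2 hY2
    rw [e1, e2, hBT, ← Matrix.mul_assoc, hinv1, Matrix.one_mul, hYXhat, sub_self]
  have hMV : covM μ V V = covM μ Xhat X - covM μ X Y * ((covM μ Y Y)⁻¹ * covM μ Y X) := by
    have e1 : covM μ V V = covM μ Xhat V - covM μ (fun ω => B.mulVec (Y ω)) V :=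
      covM_sub_left hXhat2 hBY2 hV2
    have e2 : covM μ (fun ω => B.mulVec (Y ω)) V = B * covM μ Y V :=
      covM_mulVec_left B hY2 hV2
    have e3 : covM μ Xhat V = covM μ Xhat Xhat - covM μ Xhat (fun ω => B.mulVec (Y ω)) :=
      covM_sub_right hXhat2 hXhat2 hBY2
    have e4 : covM μ Xhat (fun ω => B.mulVec (Y ω)) = covM μ Xhat Y * Bᵀ :=
      covM_mulVec_right B hXhat2 hY2
    rw [e1, e2, e3, e4, hYV, Matrix.mul_zero, sub_zero, hsymm, hBT, ← hXY_eq]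
  have hM_eq : H * (condCovM μ X S Y)ᵀ = covM μ V V := by
    rw [goal1, condCovM, hSD, hMV, hXhatX, hGform]
    simp only [Matrix.mul_sub, Matrix.sub_mul, Matrix.mul_assoc]
    abel
  rw [hM_eq]
  rw [posSemidef_iff_dotProduct_mulVec]
  constructor
  · show (covM μ V V)ᴴ = covM μ V V
    ext i j
    show star (covM μ V V j i) = covM μ V V i j
    rw [star_trivial]
    show (∫ ω, V ω j * V ω i ∂μ) = ∫ ω, V ω i * V ω j ∂μ
    exact integral_congr_ae (Filter.Eventually.of_forall fun ω => mul_comm _ _)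
  · intro x
    have hx : star x = x := funext fun i => star_trivial _
    rw [hx]
    have hquad : x ⬝ᵥ (covM μ V V *ᵥ x) = ∫ ω, (∑ i, x i * V ω i) ^ 2 ∂μ := by
      simp only [dotProduct, Matrix.mulVec, covM, Matrix.of_apply]
      calc ∑ i, x i * ∑ j, (∫ ω, V ω i * V ω j ∂μ) * x j
          = ∑ i, ∑ j, ∫ ω, (x i * V ω i) * (x j * V ω j) ∂μ := by
            refine Finset.sum_congr rfl fun i _ => ?_
            rw [Finset.mul_sum]
            refine Finset.sum_congr rfl fun j _ => ?_
            calc x i * ((∫ ω, V ω i * V ω j ∂μ) * x j)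
                = x i * ∫ ω, V ω i * V ω j * x j ∂μ := by rw [integral_mul_const]
              _ = ∫ ω, x i * (V ω i * V ω j * x j) ∂μ := (integral_const_mul _ _).symm
              _ = ∫ ω, (x i * V ω i) * (x j * V ω j) ∂μ :=
                  integral_congr_ae (Filter.Eventually.of_forall fun ω => by ring)
        _ = ∑ i, ∫ ω, ∑ j, (x i * V ω i) * (x j * V ω j) ∂μ := by
            refine Finset.sum_congr rfl fun i _ => ?_
            exact (integral_finset_sum _ fun j _ =>
              l2_mul_integrable ((hV2 i).const_mul (x i)) ((hV2 j).const_mul (x j))).symm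
        _ = ∫ ω, ∑ i, ∑ j, (x i * V ω i) * (x j * V ω j) ∂μ := by
            exact (integral_finset_sum _ fun i _ => integrable_finset_sum _ fun j _ =>
              l2_mul_integrable ((hV2 i).const_mul (x i)) ((hV2 j).const_mul (x j))).symm
        _ = ∫ ω, (∑ i, x i * V ω i) ^ 2 ∂μ := by
            refine integral_congr_ae (Filter.Eventually.of_forall fun ω => ?_)
            simp only [pow_two, Finset.sum_mul_sum]
    rw [hquad]
    exact integral_nonneg fun ω => sq_nonneg _
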